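/- arXiv:1702.02668 — 6 statements merged into one kernel-verified Lean document; each statement's English description precedes it below -/
import Mathlib

section
/- An ultrafilter U on ω is selective (for every f : ω → ω there is X ∈ U on which f is constant or injective) if and only if U is Ramsey for pairs: for every coloring c : [ω]² → 2 there is X ∈ U with c constant on [X]². -/
/-!
Colouring `{x, y}` by whether `f x = f y`, a homogeneous set in `U` is one on which `f` is
constant or injective; this direction holds for any ultrafilter.

Conversely, a selective nonprincipal `U` diagonalizes every sequence `A n ∈ U`: some `X ∈ U` has
`y ∈ A x` whenever `x < y` lie in `X`. Let `f y` be the first `k` with `y ∉ A k` (capped at `y`).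
Then `f → ∞` along `U`, so selectivity makes `f` injective, hence finite-to-one, on some `Y ∈ U`,
and `ℕ` can be cut into intervals `[a j, a (j + 1))` with `a j ≤ f y` for `y ∈ Y`,
`y ≥ a (j + 1)`. Selectivity applied to the interval index, plus a choice of parity, gives `X ∈ U`
in which any two elements are separated by a whole interval, so `x < f y`. For a colouring `c`,
diagonalizing `A n = {m | c {n, m} = ε n}`, with `ε n` the `U`-majority colour at `n`, on a
`U`-set where `ε` is constant yields a homogeneous set.
-/

open Filter Set

variable {α β : Type*}

namespace Ultrafilter

theorem exists_eventually_eq [Finite β] (U : Ultrafilter α) (g : α → β) :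
    ∃ b, ∀ᶠ x in U, g x = b :=
  eventually_exists_iff.1 (Eventually.of_forall fun x => ⟨g x, rfl⟩)

theorem exists_mem_constOn_or_injOn_of_pair_eq {U : Ultrafilter α}
    (hram : ∀ c : Finset α → Fin 2, ∃ X ∈ U, ∀ s t : Finset α,
      s.card = 2 → ↑s ⊆ X → t.card = 2 → ↑t ⊆ X → c s = c t) (f : α → β) :
    ∃ X ∈ U, (∀ x ∈ X, ∀ y ∈ X, f x = f y) ∨ InjOn f X := by
  classical
  obtain ⟨X, hX, hc⟩ := hram fun s => if ∀ x ∈ s, ∀ y ∈ s, f x = f y then 0 else 1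
  refine ⟨X, hX, ?_⟩
  rcases X.subsingleton_or_nontrivial with hsub | ⟨x₀, hx₀, x₁, hx₁, hne⟩
  · exact .inl fun x hx y hy => congrArg f (hsub hx hy)
  have key : ∀ x ∈ X, ∀ y ∈ X, x ≠ y → (f x = f y ↔ f x₀ = f x₁) := by
    intro x hx y hy hxy
    have := hc {x, y} {x₀, x₁} (Finset.card_pair hxy) (by simp [insert_subset_iff, hx, hy])
      (Finset.card_pair hne) (by simp [insert_subset_iff, hx₀, hx₁])
    simp only [Finset.mem_insert, Finset.mem_singleton, forall_eq_or_imp, forall_eq] at this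
    split_ifs at this <;> grind
  by_cases h01 : f x₀ = f x₁
  · refine .inl fun x hx y hy => ?_
    rcases eq_or_ne x y with rfl | hxy
    · rfl
    · exact (key x hx y hy hxy).2 h01
  · exact .inr fun x hx y hy hfxy => by_contra fun hxy => h01 ((key x hx y hy hxy).1 hfxy)

def IsSelective (U : Ultrafilter ℕ) : Prop :=
  ∀ f : ℕ → ℕ, ∃ X ∈ U, (∀ x ∈ X, ∀ y ∈ X, f x = f y) ∨ InjOn f X

theorem exists_strictMono_zero_le_succ (t : ℕ → ℕ) :
    ∃ a : ℕ → ℕ, StrictMono a ∧ a 0 = 0 ∧ ∀ j, t (a j) ≤ a (j + 1) := by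
  set s : ℕ → ℕ := fun b => max (t b) (b + 1)
  refine ⟨fun j => s^[j] 0, strictMono_nat_of_lt_succ fun j => ?_, rfl, fun j => ?_⟩ <;>
  · simp only [Function.iterate_succ_apply', s]
    omega

def blockIndex (a : ℕ → ℕ) (n : ℕ) : ℕ :=
  Nat.findGreatest (fun j => a j ≤ n) n

section blockIndex

variable {a : ℕ → ℕ}

theorem apply_blockIndex_le (ha0 : a 0 = 0) (n : ℕ) : a (blockIndex a n) ≤ n :=
  Nat.findGreatest_spec (P := fun j => a j ≤ n) (m := 0) n.zero_le (by simp [ha0])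

theorem lt_apply_blockIndex_succ (ha : StrictMono a) (n : ℕ) : n < a (blockIndex a n + 1) := by
  by_contra! h
  exact Nat.findGreatest_is_greatest (Nat.lt_succ_self _) ((ha.id_le _).trans h) h

theorem monotone_blockIndex (ha : StrictMono a) (ha0 : a 0 = 0) : Monotone (blockIndex a) := by
  intro m n hmn
  by_contra! h
  have := ha.monotone (show blockIndex a n + 1 ≤ blockIndex a m by omega)
  have := apply_blockIndex_le ha0 m
  have := lt_apply_blockIndex_succ ha n
  omega

theorem finite_blockIndex_eq (ha : StrictMono a) (j : ℕ) : {n | blockIndex a n = j}.Finite :=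
  (finite_Iio (a (j + 1))).subset fun n hn => hn ▸ lt_apply_blockIndex_succ ha n

end blockIndex

variable {U : Ultrafilter ℕ}

namespace IsSelective

theorem exists_mem_injOn (hsel : U.IsSelective) (hU : (U : Filter ℕ) ≤ cofinite) {g : ℕ → ℕ}
    (hg : ∀ m, {n | g n = m}.Finite) : ∃ X ∈ U, InjOn g X := by
  obtain ⟨X, hX, hconst | hinj⟩ := hsel g
  · obtain ⟨x, hx⟩ := U.nonempty_of_mem hX
    have hXfin : X.Finite := (hg (g x)).subset fun y hy => hconst y hy x hx
    exact (compl_notMem hX (hU hXfin.compl_mem_cofinite)).elim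
  · exact ⟨X, hX, hinj⟩

theorem exists_mem_add_two_le (hsel : U.IsSelective) (hU : (U : Filter ℕ) ≤ cofinite)
    {g : ℕ → ℕ} (hmono : Monotone g) (hg : ∀ m, {n | g n = m}.Finite) :
    ∃ X ∈ U, ∀ x ∈ X, ∀ y ∈ X, x < y → g x + 2 ≤ g y := by
  obtain ⟨X, hX, hinj⟩ := hsel.exists_mem_injOn hU hg
  obtain ⟨p, hp⟩ := U.exists_eventually_eq fun n => Even (g n)
  refine ⟨X ∩ {n | Even (g n) = p}, inter_mem hX hp, fun x hx y hy hxy => ?_⟩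
  have hlt : g x < g y := (hmono hxy.le).lt_of_ne fun h => hxy.ne (hinj hx.1 hy.1 h)
  have hpar : Even (g x) ↔ Even (g y) := by rw [hx.2, hy.2]
  by_contra! h
  rw [show g y = g x + 1 by omega, Nat.even_add_one] at hpar
  exact iff_not_self hpar

theorem exists_mem_block_between (hsel : U.IsSelective) (hU : (U : Filter ℕ) ≤ cofinite)
    {a : ℕ → ℕ} (ha : StrictMono a) (ha0 : a 0 = 0) :
    ∃ X ∈ U, ∀ x ∈ X, ∀ y ∈ X, x < y → ∃ j, x < a j ∧ a (j + 1) ≤ y := by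
  obtain ⟨X, hX, hsep⟩ := hsel.exists_mem_add_two_le hU (monotone_blockIndex ha ha0)
    (finite_blockIndex_eq ha)
  refine ⟨X, hX, fun x hx y hy hxy => ⟨blockIndex a x + 1, lt_apply_blockIndex_succ ha x, ?_⟩⟩
  exact (ha.monotone (hsep x hx y hy hxy)).trans (apply_blockIndex_le ha0 y)

theorem exists_mem_lt_apply (hsel : U.IsSelective) (hU : (U : Filter ℕ) ≤ cofinite)
    {f : ℕ → ℕ} (hf : Tendsto f U atTop) : ∃ X ∈ U, ∀ x ∈ X, ∀ y ∈ X, x < y → x < f y := by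
  obtain ⟨Y, hY, hinj⟩ : ∃ Y ∈ U, InjOn f Y := by
    obtain ⟨Y, hY, hconst | hinj⟩ := hsel f
    · obtain ⟨y, hy⟩ := U.nonempty_of_mem hY
      obtain ⟨z, hz, hzY⟩ := ((hf.eventually_gt_atTop (f y)).and hY).exists
      exact absurd (hconst z hzY y hy) hz.ne'
    · exact ⟨Y, hY, hinj⟩
  have hbound : ∀ b, ∃ t, ∀ n ∈ Y, f n < b → n < t := by
    intro b
    have hfin : (Y ∩ f ⁻¹' Iio b).Finite :=
      Finite.of_finite_image ((finite_Iio b).subset (image_subset_iff.2 fun n hn => hn.2))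
        (hinj.mono inter_subset_left)
    obtain ⟨m, hm⟩ := hfin.bddAbove
    exact ⟨m + 1, fun n hn hfn => Nat.lt_succ_of_le (hm ⟨hn, hfn⟩)⟩
  choose t ht using hbound
  obtain ⟨a, ha, ha0, hta⟩ := exists_strictMono_zero_le_succ t
  obtain ⟨X, hX, hblock⟩ := hsel.exists_mem_block_between hU ha ha0
  refine ⟨X ∩ Y, inter_mem hX hY, fun x hx y hy hxy => ?_⟩
  obtain ⟨j, hxj, hjy⟩ := hblock x hx.1 y hy.1 hxy
  have : a j ≤ f y := not_lt.1 fun h => ((ht _ y hy.2 h).trans_le ((hta j).trans hjy)).false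
  omega

theorem exists_mem_diagonal (hsel : U.IsSelective) (hU : (U : Filter ℕ) ≤ cofinite)
    (A : ℕ → Set ℕ) (hA : ∀ n, A n ∈ U) : ∃ X ∈ U, ∀ x ∈ X, ∀ y ∈ X, x < y → y ∈ A x := by
  classical
  let f : ℕ → ℕ := fun y => Nat.find (⟨y, .inl le_rfl⟩ : ∃ k, y ≤ k ∨ y ∉ A k)
  have hf : Tendsto f U atTop := by
    refine tendsto_atTop.2 fun k => ?_
    have hgt : ∀ᶠ y in U, k < y := hU.trans Nat.cofinite_eq_atTop.le (eventually_gt_atTop k)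
    have hAk : ∀ᶠ y in U, ∀ m ∈ Iio k, y ∈ A m :=
      (eventually_all_finite (finite_Iio k)).2 fun m _ => hA m
    filter_upwards [hgt, hAk] with y hy hyA
    refine (Nat.le_find_iff _ _).2 fun m hm => ?_
    simp only [not_or, not_le, not_not]
    exact ⟨by omega, hyA m hm⟩
  obtain ⟨X, hX, hXf⟩ := hsel.exists_mem_lt_apply hU hf
  refine ⟨X, hX, fun x hx y hy hxy => ?_⟩
  have := Nat.find_min _ (hXf x hx y hy hxy)
  simp only [not_or, not_le, not_not] at this
  exact this.2

theorem exists_mem_forall_lt_eq [Finite β] (hsel : U.IsSelective) (hU : (U : Filter ℕ) ≤ cofinite)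
    (c : ℕ → ℕ → β) : ∃ i, ∃ X ∈ U, ∀ x ∈ X, ∀ y ∈ X, x < y → c x y = i := by
  choose ε hε using fun n => U.exists_eventually_eq (c n)
  obtain ⟨i, hi⟩ := U.exists_eventually_eq ε
  obtain ⟨X, hX, hdiag⟩ := hsel.exists_mem_diagonal hU (fun n => {m | c n m = ε n}) hε
  refine ⟨i, X ∩ {n | ε n = i}, inter_mem hX hi, fun x hx y hy hxy => ?_⟩
  rw [← hx.2]
  exact hdiag x hx.1 y hy.1 hxy

end IsSelective

end Ultrafilter

theorem Finset.eq_of_card_eq_two_of_forall_lt [LinearOrder α] {X : Set α}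
    {c : Finset α → β} {i : β} (hc : ∀ x ∈ X, ∀ y ∈ X, x < y → c {x, y} = i)
    {s : Finset α} (hs : s.card = 2) (hsX : ↑s ⊆ X) : c s = i := by
  obtain ⟨x, y, hxy, rfl⟩ := Finset.card_eq_two.1 hs
  rcases hxy.lt_or_gt with h | h
  · exact hc x (hsX (by simp)) y (hsX (by simp)) h
  · rw [Finset.pair_comm]
    exact hc y (hsX (by simp)) x (hsX (by simp)) h

/-- An ultrafilter on ω is selective iff it is Ramsey for pairs. -/
theorem stmt_0 (U : Ultrafilter ℕ) (hU : ∀ a : ℕ, U ≠ pure a) :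
    (∀ f : ℕ → ℕ, ∃ X ∈ U, (∀ x ∈ X, ∀ y ∈ X, f x = f y) ∨ Set.InjOn f X) ↔
    (∀ c : Finset ℕ → Fin 2, ∃ X ∈ U, ∀ s t : Finset ℕ,
      s.card = 2 → ↑s ⊆ X → t.card = 2 → ↑t ⊆ X → c s = c t) := by
  have hcof : (U : Filter ℕ) ≤ cofinite :=
    U.le_cofinite_or_eq_pure.resolve_right fun ⟨a, ha⟩ => hU a ha
  refine ⟨fun hsel c => ?_, fun hram => Ultrafilter.exists_mem_constOn_or_injOn_of_pair_eq hram⟩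
  obtain ⟨i, X, hX, hXi⟩ :=
    Ultrafilter.IsSelective.exists_mem_forall_lt_eq hsel hcof fun x y => c {x, y}
  exact ⟨X, hX, fun s t hs hsX ht htX => (Finset.eq_of_card_eq_two_of_forall_lt hXi hs hsX).trans
    (Finset.eq_of_card_eq_two_of_forall_lt hXi ht htX).symm⟩
end

section
/- Two ultrafilters are Rudin-Keisler equivalent if and only if they are isomorphic: if U is an ultrafilter on A and V an ultrafilter on B (A, B countably infinite), and there exist f : A → B and g : B → A with f(U) = V and g(V) = U, then there is a bijection h : A → B with h(U) = V. -/
/-!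
Katětov's lemma: if `m(U) = U` for an ultrafilter `U` on a countable set, then `m` fixes
`U`-almost every point. Embed the set into `ℤ`; otherwise `m` moves `U`-almost every point up
(or down), so it agrees `U`-almost everywhere with a map `f` without periodic points. Such an `f`
has a 2-colouring `c` with `c ∘ f ≠ c` (the parity of the level within a class of eventually
meeting orbits), whereas `m(U) = U` forces every finite colouring to satisfy `c ∘ m = c`
`U`-almost everywhere.

Applied to `g ∘ f`, this makes `f` injective on a `U`-large set `S`. Shrinking `S` so that `Sᶜ`
and `(f '' S)ᶜ` are infinite, `f` on `S` extends to a bijection by matching these countably infinite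
complements, and this bijection maps `U` to `f(U) = V`.
-/

open Set Function

namespace Function

variable {α : Type*} (f : α → α)

def forwardOrbitSetoid : Setoid α where
  r x y := ∃ k j : ℕ, f^[k] x = f^[j] y
  iseqv :=
    { refl x := ⟨0, 0, rfl⟩
      symm := fun ⟨k, j, h⟩ => ⟨j, k, h.symm⟩
      trans := fun {x y z} ⟨k, j, hxy⟩ ⟨a, b, hyz⟩ => ⟨a + k, j + b, by
        rw [iterate_add_apply, hxy, ← iterate_add_apply, add_comm, iterate_add_apply, hyz,
          ← iterate_add_apply]⟩ }

variable {f}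

theorem add_eq_add_of_iterate_eq (hf : ∀ x, Injective fun n => f^[n] x) {x y : α}
    {k j k' j' : ℕ} (h : f^[k] x = f^[j] y) (h' : f^[k'] x = f^[j'] y) : j' + k = j + k' :=
  hf x <| show f^[j' + k] x = f^[j + k'] x by
    rw [iterate_add_apply, h, ← iterate_add_apply, add_comm, iterate_add_apply, ← h',
      ← iterate_add_apply]

theorem exists_bool_coloring_of_injective_iterate (hf : ∀ x, Injective fun n => f^[n] x) :
    ∃ c : α → Bool, ∀ x, c (f x) ≠ c x := by
  let s := forwardOrbitSetoid f
  choose k j hkj using fun x => Quotient.mk_out (s := s) x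
  -- `j x - k x` is the level of `x` above the chosen representative of its class.
  refine ⟨fun x => decide (Even ((j x : ℤ) - k x)), fun x => ?_⟩
  have hfx : (Quotient.mk s (f x)).out = (Quotient.mk s x).out :=
    congrArg _ (Quotient.sound (show s.r (f x) x from ⟨0, 1, rfl⟩))
  have h := hkj (f x)
  rw [hfx, ← iterate_succ_apply] at h
  have hlevel : (j x : ℤ) - k x = (j (f x) - k (f x)) + 1 := by
    have := add_eq_add_of_iterate_eq hf (hkj x) h
    omega
  simpa only [ne_eq, decide_eq_decide, hlevel, Int.even_add_one] using iff_not_self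

theorem injective_iterate_of_lt_map [Preorder α] (h : ∀ x, x < f x) (x : α) :
    Injective fun n => f^[n] x :=
  (strictMono_nat_of_lt_succ fun n => by
    simpa only [iterate_succ_apply'] using h (f^[n] x)).injective

theorem injective_iterate_of_map_lt [Preorder α] (h : ∀ x, f x < x) (x : α) :
    Injective fun n => f^[n] x :=
  injective_iterate_of_lt_map (α := αᵒᵈ) h x

end Function

theorem Set.exists_infinite_infinite_compl (α : Type*) [Infinite α] :
    ∃ s : Set α, s.Infinite ∧ sᶜ.Infinite := by
  let e := _root_.Infinite.natEmbedding α
  refine ⟨range fun n => e (2 * n),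
    infinite_range_of_injective (e.injective.comp fun a b h => by omega),
    (infinite_range_of_injective (f := fun n => e (2 * n + 1))
      (e.injective.comp fun a b h => by omega)).mono ?_⟩
  rintro _ ⟨n, rfl⟩ ⟨k, hk⟩
  have := e.injective hk
  omega

theorem Set.InjOn.exists_equiv_eqOn {α β : Type*} {f : α → β} {s : Set α} (hf : InjOn f s)
    (e : ↥sᶜ ≃ ↥(f '' s)ᶜ) : ∃ h : α ≃ β, EqOn h f s := by
  classical
  refine ⟨(Equiv.Set.sumCompl s).symm.trans
    (((Equiv.Set.imageOfInjOn f s hf).sumCongr e).trans (Equiv.Set.sumCompl (f '' s))),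
    fun a ha => ?_⟩
  simp only [Equiv.trans_apply, Equiv.Set.sumCompl_symm_apply_of_mem ha, Equiv.sumCongr_apply,
    Sum.map_inl, Equiv.Set.sumCompl_apply_inl]
  rfl

namespace Ultrafilter

variable {α β κ : Type*}

theorem map_congr {U : Ultrafilter α} {f g : α → β} (h : f =ᶠ[U] g) : U.map f = U.map g :=
  coe_injective <| by simpa only [coe_map] using Filter.map_congr h

theorem eventually_comp_eq_of_map_eq_self [Finite κ] {U : Ultrafilter α} {m : α → α}
    (hm : U.map m = U) (c : α → κ) : ∀ᶠ x in U, c (m x) = c x := by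
  obtain ⟨i, hi⟩ := (U.map c).eq_pure_of_finite
  have hc : ∀ᶠ x in U, c x = i := mem_map.1 (hi ▸ rfl : {i} ∈ U.map c)
  have hcm : ∀ᶠ x in U, c (m x) = i := by rw [← hm] at hc; exact hc
  filter_upwards [hc, hcm] with x h h' using h'.trans h.symm

theorem map_ne_self_of_injective_iterate (U : Ultrafilter α) {f : α → α}
    (hf : ∀ x, Injective fun n => f^[n] x) : U.map f ≠ U := fun hU =>
  have ⟨c, hc⟩ := exists_bool_coloring_of_injective_iterate hf
  have ⟨x, hx⟩ := (eventually_comp_eq_of_map_eq_self hU c).exists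
  hc x hx

theorem eventually_apply_eq_of_map_eq_self_int {U : Ultrafilter ℤ} {m : ℤ → ℤ}
    (hm : U.map m = U) : ∀ᶠ n in U, m n = n := by
  by_contra hfix
  have hlt : ∀ᶠ n in U, n < m n ∨ m n < n := by
    filter_upwards [eventually_not.2 hfix] with n hn using lt_or_gt_of_ne (Ne.symm hn)
  rcases eventually_or.1 hlt with hup | hdown
  · refine U.map_ne_self_of_injective_iterate (f := fun n => max (m n) (n + 1))
      (injective_iterate_of_lt_map fun n => lt_max_of_lt_right (lt_add_one n))
      ((map_congr ?_).trans hm)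
    filter_upwards [hup] with n hn using max_eq_left (Int.add_one_le_iff.2 hn)
  · refine U.map_ne_self_of_injective_iterate (f := fun n => min (m n) (n - 1))
      (injective_iterate_of_map_lt fun n => min_lt_of_right_lt (sub_one_lt n))
      ((map_congr ?_).trans hm)
    filter_upwards [hdown] with n hn using min_eq_left (Int.le_sub_one_iff.2 hn)

theorem eventually_apply_eq_of_map_eq_self [Countable α] {U : Ultrafilter α} {m : α → α}
    (hm : U.map m = U) : ∀ᶠ x in U, m x = x := by
  obtain ⟨e, he⟩ : ∃ e : α → ℤ, Injective e :=
    have ⟨e, he⟩ := Countable.exists_injective_nat α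
    ⟨_, Nat.cast_injective.comp he⟩
  have hcomm : Function.extend e (e ∘ m) id ∘ e = e ∘ m := funext (he.extend_apply _ _)
  have hm' : (U.map e).map (Function.extend e (e ∘ m) id) = U.map e := by
    rw [map_map, hcomm, ← map_map, hm]
  filter_upwards [mem_map.1 (eventually_apply_eq_of_map_eq_self_int hm')] with x hx
  exact he (by simpa only [mem_preimage, mem_ofPred_eq, he.extend_apply, comp_apply] using hx)

theorem exists_mem_infinite_compl [Infinite α] (U : Ultrafilter α) : ∃ s ∈ U, sᶜ.Infinite := by
  obtain ⟨s, hs, hsc⟩ := Set.exists_infinite_infinite_compl α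
  rcases U.mem_or_compl_mem s with h | h
  · exact ⟨s, h, hsc⟩
  · exact ⟨sᶜ, h, by rwa [compl_compl]⟩

end Ultrafilter

open Ultrafilter

/-- Two ultrafilters on countably infinite sets which are Rudin-Keisler
reducible to each other are isomorphic via a bijection. -/
theorem stmt_8 {A B : Type} [Countable A] [Infinite A] [Countable B] [Infinite B]
    (U : Ultrafilter A) (V : Ultrafilter B) (f : A → B) (g : B → A)
    (hf : U.map f = V) (hg : V.map g = U) :
    ∃ h : A ≃ B, U.map h = V := by
  have hK : ∀ᶠ a in U, g (f a) = a :=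
    eventually_apply_eq_of_map_eq_self (m := g ∘ f) (by rw [← map_map, hf, hg])
  obtain ⟨X, hXU, hXc⟩ := U.exists_mem_infinite_compl
  obtain ⟨Y, hYV, hYc⟩ := V.exists_mem_infinite_compl
  set S := {a | g (f a) = a} ∩ X ∩ f ⁻¹' Y
  have hSU : S ∈ U := Filter.inter_mem (Filter.inter_mem hK hXU) (mem_map.1 (hf ▸ hYV))
  have hinj : InjOn f S := fun a ha b hb hab => by rw [← ha.1.1, ← hb.1.1, hab]
  have : Infinite ↥Sᶜ := (hXc.mono (compl_subset_compl.2 fun a ha => ha.1.2)).to_subtype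
  have : Infinite ↥(f '' S)ᶜ :=
    (hYc.mono (compl_subset_compl.2 (image_subset_iff.2 fun a ha => ha.2))).to_subtype
  obtain ⟨h, hh⟩ := hinj.exists_equiv_eqOn nonempty_equiv_of_countable.some
  exact ⟨h, (map_congr (Filter.eventuallyEq_of_mem hSU hh)).trans hf⟩
end

section
/- The Erdős–Rado canonization theorem for pairs: for every equivalence relation E on [ω]², there exists an infinite M ⊆ ω and a set I ⊆ {0,1} such that for all a, b ∈ [M]², a E b if and only if π_I(a) = π_I(b), where π_I(a) = {a_i : i ∈ I} and a₀ < a₁ enumerates a in increasing order. -/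
/-!
By Ramsey's theorem for 4-tuples there is an infinite set on which whether two pairs are
equivalent depends only on the relative order of their endpoints. Two distinct pairs share
their left end, share their right end, or are disjoint, shifted (the right end of one is the
left end of the other), crossing or nested. Transitivity shows that if one of the last four
configurations is ever equivalent, then all pairs are equivalent. Otherwise the equivalence
is determined by which of the first two configurations are equivalent, and this choice is
the set `I`.
-/

/-- Projection of an increasing pair to the coordinates in `I`. -/
def pairProj (I : Set (Fin 2)) (p : ℕ × ℕ) : Set ℕ :=
  {n | (0 ∈ I ∧ n = p.1) ∨ (1 ∈ I ∧ n = p.2)}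

theorem Set.Infinite.exists_monochromatic_subset {C : Type*} [Finite C] (k : ℕ) :
    ∀ (f : (Fin k → ℕ) → C) {S : Set ℕ}, S.Infinite →
      ∃ T ⊆ S, T.Infinite ∧ ∃ c, ∀ v : Fin k → ℕ, StrictMono v → (∀ i, v i ∈ T) → f v = c := by
  induction k with
  | zero =>
    exact fun f S hS =>
      ⟨S, subset_rfl, hS, f Fin.elim0, fun v _ _ => congrArg f (funext fun i => i.elim0)⟩
  | succ k ih =>
    intro f S₀ hS₀
    have step : ∀ S : {S : Set ℕ // S.Infinite}, ∃ a ∈ S.1, ∃ T : {T : Set ℕ // T.Infinite},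
        T.1 ⊆ S.1 ∧ (∀ x ∈ T.1, a < x) ∧ ∃ c, ∀ v : Fin k → ℕ, StrictMono v →
          (∀ i, v i ∈ T.1) → f (Fin.cons a v) = c := by
      rintro ⟨S, hS⟩
      obtain ⟨a, ha⟩ := hS.nonempty
      obtain ⟨T, hTS, hT, c, hc⟩ := ih (fun v => f (Fin.cons a v)) (hS.sdiff (Set.finite_Iic a))
      exact ⟨a, ha, ⟨T, hT⟩, fun x hx => (hTS hx).1,
        fun x hx => not_le.mp (hTS hx).2, c, hc⟩
    choose a haS next hsub hlt c hc using step
    -- along the chain, `a n` has colour `c n` with every tuple of later elements;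
    -- keep the `a n` of one colour that occurs infinitely often
    let S : ℕ → {S : Set ℕ // S.Infinite} := fun n => Nat.rec ⟨S₀, hS₀⟩ (fun _ T => next T) n
    have hS : Antitone fun n => (S n).1 := antitone_nat_of_succ_le fun n => hsub (S n)
    have ha : StrictMono fun n => a (S n) :=
      strictMono_nat_of_lt_succ fun n => hlt (S n) _ (haS (S (n + 1)))
    obtain ⟨c₀, hc₀⟩ := Finite.exists_infinite_fiber fun n => c (S n)
    have hN := Set.infinite_coe_iff.mp hc₀
    refine ⟨(fun n => a (S n)) '' ((fun n => c (S n)) ⁻¹' {c₀}),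
      Set.image_subset_iff.mpr fun n _ => hS (Nat.zero_le n) (haS (S n)),
      hN.image ha.injective.injOn, c₀, fun v hv hvT => ?_⟩
    obtain ⟨n, hn, hv₀⟩ := hvT 0
    have htail : ∀ i, Fin.tail v i ∈ (next (S n)).1 := by
      intro i
      obtain ⟨m, -, hm⟩ := hvT i.succ
      have hnm : n < m := ha.lt_iff_lt.mp (hv₀.trans_lt ((hv (Fin.succ_pos i)).trans_eq hm.symm))
      show v i.succ ∈ _
      rw [← hm]
      exact hS hnm (haS (S m))
    rw [← Fin.cons_self_tail v, ← hv₀]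
    exact (hc (S n) _ (hv.comp Fin.strictMono_succ) htail).trans hn

theorem pairProj_prodMap (f : ℕ → ℕ) (I : Set (Fin 2)) (p : ℕ × ℕ) :
    pairProj I (Prod.map f f p) = f '' pairProj I p := by
  ext n
  simp only [pairProj, Prod.map_fst, Prod.map_snd, Set.mem_ofPred_eq, Set.mem_image]
  aesop

theorem pairProj_eq_pairProj_iff {I : Set (Fin 2)} {p q : ℕ × ℕ} (hp : p.1 < p.2)
    (hq : q.1 < q.2) :
    pairProj I p = pairProj I q ↔ (0 ∈ I → p.1 = q.1) ∧ (1 ∈ I → p.2 = q.2) := by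
  simp only [pairProj, Set.ext_iff, Set.mem_ofPred_eq]
  by_cases h₀ : (0 : Fin 2) ∈ I <;> by_cases h₁ : (1 : Fin 2) ∈ I <;> simp [h₀, h₁]
  refine ⟨fun h => ?_, fun ⟨h₁, h₂⟩ n => by rw [h₁, h₂]⟩
  have := h p.1; have := h p.2; have := h q.1; have := h q.2
  grind

structure IsEquivOnPairs (E : ℕ × ℕ → ℕ × ℕ → Prop) : Prop where
  refl : ∀ p : ℕ × ℕ, p.1 < p.2 → E p p
  symm : ∀ p q : ℕ × ℕ, p.1 < p.2 → q.1 < q.2 → E p q → E q p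
  trans : ∀ p q r : ℕ × ℕ, p.1 < p.2 → q.1 < q.2 → r.1 < r.2 → E p q → E q r → E p r

theorem IsEquivOnPairs.comap {E : ℕ × ℕ → ℕ × ℕ → Prop} (hE : IsEquivOnPairs E) {g : ℕ → ℕ}
    (hg : StrictMono g) : IsEquivOnPairs fun p q => E (Prod.map g g p) (Prod.map g g q) :=
  ⟨fun _ hp => hE.refl _ (hg hp), fun _ _ hp hq => hE.symm _ _ (hg hp) (hg hq),
    fun _ _ _ hp hq hr => hE.trans _ _ _ (hg hp) (hg hq) (hg hr)⟩

-- Indices may repeat, so this also covers pairs with only three distinct endpoints.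
def IsOrderInvariant (Q : ℕ × ℕ → ℕ × ℕ → Prop) : Prop :=
  ∀ s t : Fin 4 → ℕ, StrictMono s → StrictMono t → ∀ i j k l : Fin 4,
    Q (s i, s j) (s k, s l) → Q (t i, t j) (t k, t l)

theorem exists_strictMono_isOrderInvariant (E : ℕ × ℕ → ℕ × ℕ → Prop) :
    ∃ g : ℕ → ℕ, StrictMono g ∧
      IsOrderInvariant fun p q => E (Prod.map g g p) (Prod.map g g q) := by
  obtain ⟨T, -, hT, c, hc⟩ := Set.infinite_univ.exists_monochromatic_subset 4
    fun v : Fin 4 → ℕ => fun i j k l : Fin 4 => E (v i, v j) (v k, v l)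
  have hg := Nat.nth_strictMono hT
  have hcol : ∀ s : Fin 4 → ℕ, StrictMono s →
      (fun i j k l => E (Nat.nth (· ∈ T) (s i), Nat.nth (· ∈ T) (s j))
        (Nat.nth (· ∈ T) (s k), Nat.nth (· ∈ T) (s l))) = c :=
    fun s hs => hc _ (hg.comp hs) fun i => Nat.nth_mem_of_infinite hT _
  refine ⟨Nat.nth (· ∈ T), hg, fun s t hs ht i j k l => ?_⟩
  exact (congrFun (congrFun (congrFun (congrFun ((hcol s hs).trans (hcol t ht).symm) i) j) k)
    l).to_iff.mp

namespace IsOrderInvariant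

variable {Q : ℕ × ℕ → ℕ × ℕ → Prop} {a b c d a' b' c' d' : ℕ}

theorem apply₄ (h : IsOrderInvariant Q) (h₁ : a < b) (h₂ : b < c) (h₃ : c < d)
    (h₁' : a' < b') (h₂' : b' < c') (h₃' : c' < d') (i j k l : Fin 4)
    (hQ : Q (![a, b, c, d] i, ![a, b, c, d] j) (![a, b, c, d] k, ![a, b, c, d] l)) :
    Q (![a', b', c', d'] i, ![a', b', c', d'] j) (![a', b', c', d'] k, ![a', b', c', d'] l) :=
  h _ _ (by simp [strictMono_vecCons, *]) (by simp [strictMono_vecCons, *]) i j k l hQ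

theorem sameFst (h : IsOrderInvariant Q) (h₁ : a < b) (h₂ : b < c) (h₁' : a' < b')
    (h₂' : b' < c') (hQ : Q (a, b) (a, c)) : Q (a', b') (a', c') :=
  h.apply₄ h₁ h₂ (lt_add_one c) h₁' h₂' (lt_add_one c') 0 1 0 2 hQ

theorem sameSnd (h : IsOrderInvariant Q) (h₁ : a < b) (h₂ : b < c) (h₁' : a' < b')
    (h₂' : b' < c') (hQ : Q (a, c) (b, c)) : Q (a', c') (b', c') :=
  h.apply₄ h₁ h₂ (lt_add_one c) h₁' h₂' (lt_add_one c') 0 2 1 2 hQ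

theorem shift (h : IsOrderInvariant Q) (h₁ : a < b) (h₂ : b < c) (h₁' : a' < b')
    (h₂' : b' < c') (hQ : Q (a, b) (b, c)) : Q (a', b') (b', c') :=
  h.apply₄ h₁ h₂ (lt_add_one c) h₁' h₂' (lt_add_one c') 0 1 1 2 hQ

theorem disjoint (h : IsOrderInvariant Q) (h₁ : a < b) (h₂ : b < c) (h₃ : c < d)
    (h₁' : a' < b') (h₂' : b' < c') (h₃' : c' < d') (hQ : Q (a, b) (c, d)) :
    Q (a', b') (c', d') :=
  h.apply₄ h₁ h₂ h₃ h₁' h₂' h₃' 0 1 2 3 hQ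

theorem crossing (h : IsOrderInvariant Q) (h₁ : a < b) (h₂ : b < c) (h₃ : c < d)
    (h₁' : a' < b') (h₂' : b' < c') (h₃' : c' < d') (hQ : Q (a, c) (b, d)) :
    Q (a', c') (b', d') :=
  h.apply₄ h₁ h₂ h₃ h₁' h₂' h₃' 0 2 1 3 hQ

theorem nested (h : IsOrderInvariant Q) (h₁ : a < b) (h₂ : b < c) (h₃ : c < d)
    (h₁' : a' < b') (h₂' : b' < c') (h₃' : c' < d') (hQ : Q (a, d) (b, c)) :
    Q (a', d') (b', c') :=
  h.apply₄ h₁ h₂ h₃ h₁' h₂' h₃' 0 3 1 2 hQ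

end IsOrderInvariant

-- `KerLE Prod.fst Q` says `E_{0} ≤ Q` on `[ω]²`.
def KerLE (f : ℕ × ℕ → ℕ) (Q : ℕ × ℕ → ℕ × ℕ → Prop) : Prop :=
  ∀ p q : ℕ × ℕ, p.1 < p.2 → q.1 < q.2 → f p = f q → Q p q

namespace IsEquivOnPairs

variable {Q : ℕ × ℕ → ℕ × ℕ → Prop} {a b c d : ℕ}

theorem of_disjoint (hQ : IsEquivOnPairs Q) (hinv : IsOrderInvariant Q) (h₁ : a < b)
    (h₂ : b < c) (h₃ : c < d) (h : Q (a, b) (c, d)) :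
    ∀ p q : ℕ × ℕ, p.1 < p.2 → q.1 < q.2 → Q p q := by
  intro p q hp hq
  set z := max p.2 q.2 + 1
  have hpz : Q p (z, z + 1) := hinv.disjoint h₁ h₂ h₃ hp (by omega) (lt_add_one z) h
  have hqz : Q q (z, z + 1) := hinv.disjoint h₁ h₂ h₃ hq (by omega) (lt_add_one z) h
  exact hQ.trans _ _ _ hp (lt_add_one z) hq hpz (hQ.symm _ _ hq (lt_add_one z) hqz)

theorem of_shift (hQ : IsEquivOnPairs Q) (hinv : IsOrderInvariant Q) (h₁ : a < b)
    (h₂ : b < c) (h : Q (a, b) (b, c)) :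
    ∀ p q : ℕ × ℕ, p.1 < p.2 → q.1 < q.2 → Q p q := by
  have h₀₁ : Q (0, 1) (1, 2) := hinv.shift h₁ h₂ zero_lt_one one_lt_two h
  have h₁₂ : Q (1, 2) (2, 3) := hinv.shift h₁ h₂ one_lt_two (by norm_num) h
  exact hQ.of_disjoint hinv zero_lt_one one_lt_two (by norm_num)
    (hQ.trans _ _ _ zero_lt_one one_lt_two (by norm_num) h₀₁ h₁₂)

theorem of_crossing (hQ : IsEquivOnPairs Q) (hinv : IsOrderInvariant Q) (h₁ : a < b)
    (h₂ : b < c) (h₃ : c < d) (h : Q (a, c) (b, d)) :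
    ∀ p q : ℕ × ℕ, p.1 < p.2 → q.1 < q.2 → Q p q := by
  have h₀₂ : Q (0, 2) (1, 3) := hinv.crossing h₁ h₂ h₃ (by norm_num) (by norm_num) (by norm_num) h
  have h₁₃ : Q (1, 3) (2, 4) := hinv.crossing h₁ h₂ h₃ (by norm_num) (by norm_num) (by norm_num) h
  have h₀₄ : Q (0, 2) (2, 4) := hQ.trans _ _ _ (by norm_num) (by norm_num) (by norm_num) h₀₂ h₁₃
  exact hQ.of_shift hinv (by norm_num) (by norm_num) h₀₄

theorem of_nested (hQ : IsEquivOnPairs Q) (hinv : IsOrderInvariant Q) (h₁ : a < b)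
    (h₂ : b < c) (h₃ : c < d) (h : Q (a, d) (b, c)) :
    ∀ p q : ℕ × ℕ, p.1 < p.2 → q.1 < q.2 → Q p q := by
  have h₁₂ : Q (0, 5) (1, 2) := hinv.nested h₁ h₂ h₃ (by norm_num) (by norm_num) (by norm_num) h
  have h₃₄ : Q (0, 5) (3, 4) := hinv.nested h₁ h₂ h₃ (by norm_num) (by norm_num) (by norm_num) h
  have h₁₄ : Q (1, 2) (3, 4) := hQ.trans _ _ _ (by norm_num) (by norm_num) (by norm_num)
    (hQ.symm _ _ (by norm_num) (by norm_num) h₁₂) h₃₄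
  exact hQ.of_disjoint hinv (by norm_num) (by norm_num) (by norm_num) h₁₄

theorem of_fst_ne_of_snd_ne (hQ : IsEquivOnPairs Q) (hinv : IsOrderInvariant Q)
    {p q : ℕ × ℕ} (hp : p.1 < p.2) (hq : q.1 < q.2) (h : Q p q) (h₁ : p.1 ≠ q.1)
    (h₂ : p.2 ≠ q.2) : ∀ p q : ℕ × ℕ, p.1 < p.2 → q.1 < q.2 → Q p q := by
  wlog hlt : p.1 < q.1 generalizing p q
  · exact this hq hp (hQ.symm _ _ hp hq h) h₁.symm h₂.symm (by omega)
  obtain ⟨a, b⟩ := p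
  obtain ⟨c, d⟩ := q
  dsimp only at *
  rcases lt_trichotomy b c with hbc | rfl | hcb
  · exact hQ.of_disjoint hinv hp hbc hq h
  · exact hQ.of_shift hinv hp hq h
  · rcases h₂.lt_or_gt with hbd | hdb
    · exact hQ.of_crossing hinv hlt hcb hbd h
    · exact hQ.of_nested hinv hlt hq hdb h

theorem kerLE_fst_of_snd_ne (hQ : IsEquivOnPairs Q) (hinv : IsOrderInvariant Q)
    {p q : ℕ × ℕ} (hp : p.1 < p.2) (hq : q.1 < q.2) (h : Q p q) (h₂ : p.2 ≠ q.2) :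
    KerLE Prod.fst Q := by
  wlog hlt : p.2 < q.2 generalizing p q
  · exact this hq hp (hQ.symm _ _ hp hq h) h₂.symm (by omega)
  by_cases h₁ : p.1 = q.1
  · obtain ⟨a, b⟩ := p
    obtain ⟨c, d⟩ := q
    dsimp only at *
    subst h₁
    rintro ⟨a', b'⟩ ⟨c', d'⟩ hp' hq' (rfl : a' = c')
    rcases lt_trichotomy b' d' with hbd | rfl | hdb
    · exact hinv.sameFst hp hlt hp' hbd h
    · exact hQ.refl _ hp'
    · exact hQ.symm _ _ hq' hp' (hinv.sameFst hp hlt hq' hdb h)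
  · exact fun p' q' hp' hq' _ => hQ.of_fst_ne_of_snd_ne hinv hp hq h h₁ h₂ p' q' hp' hq'

theorem kerLE_snd_of_fst_ne (hQ : IsEquivOnPairs Q) (hinv : IsOrderInvariant Q)
    {p q : ℕ × ℕ} (hp : p.1 < p.2) (hq : q.1 < q.2) (h : Q p q) (h₁ : p.1 ≠ q.1) :
    KerLE Prod.snd Q := by
  wlog hlt : p.1 < q.1 generalizing p q
  · exact this hq hp (hQ.symm _ _ hp hq h) h₁.symm (by omega)
  by_cases h₂ : p.2 = q.2
  · obtain ⟨a, b⟩ := p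
    obtain ⟨c, d⟩ := q
    dsimp only at *
    subst h₂
    rintro ⟨a', b'⟩ ⟨c', d'⟩ hp' hq' (rfl : b' = d')
    rcases lt_trichotomy a' c' with hac | rfl | hca
    · exact hinv.sameSnd hlt hq hac hq' h
    · exact hQ.refl _ hp'
    · exact hQ.symm _ _ hq' hp' (hinv.sameSnd hlt hq hca hp' h)
  · exact fun p' q' hp' hq' _ => hQ.of_fst_ne_of_snd_ne hinv hp hq h h₁ h₂ p' q' hp' hq'

theorem of_kerLE_fst_of_kerLE_snd (hQ : IsEquivOnPairs Q) (hfst : KerLE Prod.fst Q)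
    (hsnd : KerLE Prod.snd Q) : ∀ p q : ℕ × ℕ, p.1 < p.2 → q.1 < q.2 → Q p q := by
  intro p q hp hq
  set z := max p.2 q.2 + 1
  have hpz : Q p (p.1, z) := hfst _ _ hp (by omega) rfl
  have hzz : Q (p.1, z) (q.1, z) := hsnd _ _ (by omega) (by omega) rfl
  have hzq : Q (q.1, z) q := hfst _ _ (by omega) hq rfl
  exact hQ.trans _ _ _ hp (by omega) hq hpz (hQ.trans _ _ _ (by omega) (by omega) hq hzz hzq)

-- `0 ∈ I` unless pairs with a common right end are always equivalent; likewise `1 ∈ I`.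
theorem exists_pairProj_iff (hQ : IsEquivOnPairs Q) (hinv : IsOrderInvariant Q) :
    ∃ I : Set (Fin 2), ∀ p q : ℕ × ℕ, p.1 < p.2 → q.1 < q.2 →
      (Q p q ↔ pairProj I p = pairProj I q) := by
  refine ⟨{i | i = 0 ∧ ¬KerLE Prod.snd Q ∨ i = 1 ∧ ¬KerLE Prod.fst Q}, fun p q hp hq => ?_⟩
  rw [pairProj_eq_pairProj_iff hp hq]
  simp only [Set.mem_ofPred_eq, Fin.isValue, true_and, zero_ne_one, one_ne_zero, false_and,
    or_false, false_or]
  constructor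
  · intro h
    exact ⟨fun hsnd => by_contra fun h₁ => hsnd (hQ.kerLE_snd_of_fst_ne hinv hp hq h h₁),
      fun hfst => by_contra fun h₂ => hfst (hQ.kerLE_fst_of_snd_ne hinv hp hq h h₂)⟩
  · rintro ⟨h₁, h₂⟩
    by_cases hsnd : KerLE Prod.snd Q <;> by_cases hfst : KerLE Prod.fst Q
    · exact hQ.of_kerLE_fst_of_kerLE_snd hfst hsnd p q hp hq
    · exact hsnd p q hp hq (h₂ hfst)
    · exact hfst p q hp hq (h₁ hsnd)
    · exact Prod.ext (h₁ hsnd) (h₂ hfst) ▸ hQ.refl p hp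

end IsEquivOnPairs

/-- The Erdős–Rado canonization theorem for pairs. -/
theorem stmt_13 (E : ℕ × ℕ → ℕ × ℕ → Prop)
    (hrefl : ∀ p : ℕ × ℕ, p.1 < p.2 → E p p)
    (hsymm : ∀ p q : ℕ × ℕ, p.1 < p.2 → q.1 < q.2 → E p q → E q p)
    (htrans : ∀ p q r : ℕ × ℕ, p.1 < p.2 → q.1 < q.2 → r.1 < r.2 →
      E p q → E q r → E p r) :
    ∃ M : Set ℕ, M.Infinite ∧ ∃ I : Set (Fin 2),
      ∀ p q : ℕ × ℕ, p.1 < p.2 → q.1 < q.2 →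
        p.1 ∈ M → p.2 ∈ M → q.1 ∈ M → q.2 ∈ M →
        (E p q ↔ pairProj I p = pairProj I q) := by
  obtain ⟨g, hg, hinv⟩ := exists_strictMono_isOrderInvariant E
  obtain ⟨I, hI⟩ := (IsEquivOnPairs.mk hrefl hsymm htrans).comap hg |>.exists_pairProj_iff hinv
  refine ⟨Set.range g, Set.infinite_range_of_injective hg.injective, I, ?_⟩
  rintro ⟨_, _⟩ ⟨_, _⟩ hp hq ⟨a, rfl⟩ ⟨b, rfl⟩ ⟨c, rfl⟩ ⟨d, rfl⟩
  have := hI (a, b) (c, d) (hg.lt_iff_lt.mp hp) (hg.lt_iff_lt.mp hq)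
  rwa [← (Set.image_injective.mpr hg.injective).eq_iff, ← pairProj_prodMap,
    ← pairProj_prodMap] at this
end

section
/- Galvin's lemma instance derived from Nash-Williams: for every front F on an infinite set M ⊆ ω, there is an infinite N ⊆ M such that F|N = {a ∈ F : a ⊆ N} is a barrier on N, i.e., F|N is Sperner. -/
/-- `a` is an initial segment of the infinite set `X`. -/
def InitSegOfSet (a : Finset ℕ) (X : Set ℕ) : Prop :=
  (↑a : Set ℕ) = {n ∈ X | ∃ m ∈ a, n ≤ m}

/-- `s` is an initial segment of the finite set `t`. -/
def InitSeg (s t : Finset ℕ) : Prop :=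
  s = t.filter (fun n => ∃ m ∈ s, n ≤ m)

/-!
Apply the Nash-Williams dichotomy to the family `G` of members of `F` that properly contain another
member of `F`: on some infinite `N ⊆ M`, either no finite subset of `N` lies in `G`, and then `F|N`
is Sperner, or every infinite `Y ⊆ N` has an initial segment in `G`. The second case is impossible:
take `a ∈ F|N` of least size and `Y = a ∪ N/a`; as `F` is Nash-Williams, the only initial segment
of `Y` in `F` is `a`, and `a` properly contains no member of `F|N`.

The dichotomy is proved by combinatorial forcing, `above N s` standing for `N/s`. `X` accepts `s`
if every infinite `Y ⊆ X` has an initial segment `t` with `s ∪ t ∈ G`, and rejects `s` if no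
infinite subset of `X` accepts it. A diagonalization gives `N` such that `N/s` decides every finite
`s ⊆ N`. If `N` rejects `∅`, then a rejected `s` has only finitely many accepted one-point
extensions, and a second diagonalization gives `Z ⊆ N` all of whose finite subsets are rejected,
so none lies in `G`.
-/

namespace NashWilliams

def above (X : Set ℕ) (s : Finset ℕ) : Set ℕ := {n ∈ X | ∀ m ∈ s, m < n}

@[simp]
lemma above_empty (X : Set ℕ) : above X ∅ = X := by
  simp [above]

lemma above_subset (X : Set ℕ) (s : Finset ℕ) : above X s ⊆ X := fun _ hn => hn.1

lemma above_mono {X Y : Set ℕ} (h : X ⊆ Y) (s : Finset ℕ) : above X s ⊆ above Y s :=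
  fun _ hn => ⟨h hn.1, hn.2⟩

lemma mem_above_insert {X : Set ℕ} {s : Finset ℕ} {n y : ℕ} :
    y ∈ above X (insert n s) ↔ y ∈ above X s ∧ n < y := by
  simp [above, and_comm, and_assoc]

lemma infinite_above {X : Set ℕ} (hX : X.Infinite) (s : Finset ℕ) : (above X s).Infinite :=
  (hX.sdiff (Set.finite_Iic (s.sup id))).mono fun _ hn =>
    ⟨hn.1, fun _ hm => (Finset.le_sup (f := id) hm).trans_lt (not_le.1 hn.2)⟩

lemma subset_of_initSegOfSet {a : Finset ℕ} {X : Set ℕ} (h : InitSegOfSet a X) : ↑a ⊆ X := by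
  rw [h]; exact fun _ hn => hn.1

lemma initSegOfSet_empty (X : Set ℕ) : InitSegOfSet ∅ X := by
  simp [InitSegOfSet]

lemma initSegOfSet_insert_sInf {Y : Set ℕ} (hY : Y.Nonempty) {t : Finset ℕ}
    (ht : InitSegOfSet t {y ∈ Y | sInf Y < y}) : InitSegOfSet (insert (sInf Y) t) Y := by
  have hmin := Nat.sInf_mem hY
  unfold InitSegOfSet at ht ⊢
  ext y
  have hy := Set.ext_iff.1 ht y
  have hle : y ∈ Y → sInf Y ≤ y := fun h => Nat.sInf_le h
  simp only [Finset.coe_insert, Set.mem_insert_iff, Finset.mem_coe, Set.mem_ofPred_eq,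
    Finset.mem_insert, exists_eq_or_imp] at hy ⊢
  constructor
  · rintro (rfl | hyt)
    · exact ⟨hmin, Or.inl le_rfl⟩
    · exact ⟨(hy.1 hyt).1.1, Or.inr (hy.1 hyt).2⟩
  · rintro ⟨hyY, hym | ⟨m, hmt, hym⟩⟩
    · exact Or.inl (le_antisymm hym (hle hyY))
    · rcases (hle hyY).lt_or_eq with hlt | heq
      · exact Or.inr (hy.2 ⟨⟨hyY, hlt⟩, m, hmt, hym⟩)
      · exact Or.inl heq.symm

lemma initSeg_of_initSegOfSet {a b : Finset ℕ} {Z : Set ℕ} (ha : InitSegOfSet a Z)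
    (hb : InitSegOfSet b Z) (hab : ∀ m ∈ a, ∃ m' ∈ b, m ≤ m') : InitSeg a b := by
  unfold InitSeg
  ext n
  have hna := Set.ext_iff.1 ha n
  have hnb := Set.ext_iff.1 hb n
  simp only [Finset.mem_coe, Set.mem_ofPred_eq] at hna hnb
  rw [Finset.mem_filter]
  exact ⟨fun hn => ⟨hnb.2 ⟨(hna.1 hn).1, hab n hn⟩, n, hn, le_rfl⟩,
    fun hn => hna.2 ⟨(hnb.1 hn.1).1, hn.2⟩⟩

lemma initSeg_or_initSeg_of_initSegOfSet {a b : Finset ℕ} {Z : Set ℕ} (ha : InitSegOfSet a Z)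
    (hb : InitSegOfSet b Z) : InitSeg a b ∨ InitSeg b a := by
  by_contra! h
  obtain ⟨m, hma, hm⟩ : ∃ m ∈ a, ∀ m' ∈ b, m' < m := by
    by_contra! h'; exact h.1 (initSeg_of_initSegOfSet ha hb h')
  obtain ⟨m', hm'b, hm'⟩ : ∃ m' ∈ b, ∀ m ∈ a, m < m' := by
    by_contra! h'; exact h.2 (initSeg_of_initSegOfSet hb ha h')
  exact lt_asymm (hm m' hm'b) (hm' m hma)

lemma initSegOfSet_union_above (a : Finset ℕ) (X : Set ℕ) :
    InitSegOfSet a (↑a ∪ above X a) := by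
  ext n
  simp only [Finset.mem_coe, Set.mem_ofPred_eq, Set.mem_union]
  refine ⟨fun hn => ⟨Or.inl hn, n, hn, le_rfl⟩, ?_⟩
  rintro ⟨hn | ⟨-, hlt⟩, m, hm, hnm⟩
  · exact hn
  · exact absurd hnm (not_le.2 (hlt m hm))

section Diagonal

variable {P : Set ℕ → Finset ℕ → Prop} {M : Set ℕ}

lemma exists_forall_mem_finset (hP : ∀ ⦃X Y s⦄, Y ⊆ X → P X s → P Y s)
    (h : ∀ X ⊆ M, X.Infinite → ∀ s, ∃ Y ⊆ X, Y.Infinite ∧ P Y s) (S : Finset (Finset ℕ)) :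
    ∀ X ⊆ M, X.Infinite → ∃ Y ⊆ X, Y.Infinite ∧ ∀ s ∈ S, P Y s := by
  classical
  induction S using Finset.induction_on with
  | empty => exact fun X _ hX => ⟨X, subset_rfl, hX, by simp⟩
  | insert s S _ ih =>
    intro X hXM hX
    obtain ⟨Y, hYX, hY, hPY⟩ := ih X hXM hX
    obtain ⟨Z, hZY, hZ, hPZ⟩ := h Y (hYX.trans hXM) hY s
    refine ⟨Z, hZY.trans hYX, hZ, ?_⟩
    simpa [hPZ] using fun t ht => hP hZY (hPY t ht)

lemma exists_diagonal_step (hP : ∀ ⦃X Y s⦄, Y ⊆ X → P X s → P Y s)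
    (h : ∀ X ⊆ M, X.Infinite → ∀ s, ∃ Y ⊆ X, Y.Infinite ∧ P Y s) :
    ∀ X ⊆ M, X.Infinite → ∃ Y ⊆ X, Y.Infinite ∧ (∀ y ∈ Y, sInf X < y) ∧
      ∀ s : Finset ℕ, (∀ x ∈ s, x ≤ sInf X) → P Y s := by
  intro X hXM hX
  obtain ⟨Y, hYX, hY, hPY⟩ := exists_forall_mem_finset hP h (Finset.range (sInf X + 1)).powerset
    (above X {sInf X}) ((above_subset _ _).trans hXM) (infinite_above hX _)
  refine ⟨Y, hYX.trans (above_subset _ _), hY, fun y hy => (hYX hy).2 _ (by simp), ?_⟩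
  exact fun s hs => hPY s (by simpa [Finset.subset_iff, Nat.lt_succ_iff] using hs)

theorem exists_diagonal (hP : ∀ ⦃X Y s⦄, Y ⊆ X → P X s → P Y s) (hM : M.Infinite)
    (h : ∀ X ⊆ M, X.Infinite → ∀ s, ∃ Y ⊆ X, Y.Infinite ∧ P Y s) :
    ∃ N ⊆ M, N.Infinite ∧ ∀ s : Finset ℕ, ↑s ⊆ N → P (above N s) s := by
  choose! f hfX hf hfgt hfP using exists_diagonal_step hP h
  set X : ℕ → Set ℕ := fun k => f^[k] M
  have hX_succ (k : ℕ) : X (k + 1) = f (X k) := Function.iterate_succ_apply' _ _ _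
  have hXM (k : ℕ) : X k ⊆ M ∧ (X k).Infinite := by
    induction k with
    | zero => exact ⟨subset_rfl, hM⟩
    | succ k ih => rw [hX_succ]; exact ⟨(hfX _ ih.1 ih.2).trans ih.1, hf _ ih.1 ih.2⟩
  have hX_anti : Antitone X := antitone_nat_of_succ_le fun k => by
    rw [hX_succ]; exact hfX _ (hXM k).1 (hXM k).2
  set n : ℕ → ℕ := fun k => sInf (X (k + 1))
  have hn_mem (k : ℕ) : n k ∈ X (k + 1) := Nat.sInf_mem (hXM _).2.nonempty
  have hn : StrictMono n := strictMono_nat_of_lt_succ fun k => by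
    have := hn_mem (k + 1); rw [hX_succ] at this
    exact hfgt _ (hXM _).1 (hXM _).2 _ this
  have hP_succ (k : ℕ) (s : Finset ℕ) (hs : ∀ x ∈ s, x ≤ sInf (X k)) : P (X (k + 1)) s := by
    rw [hX_succ]; exact hfP _ (hXM k).1 (hXM k).2 s hs
  refine ⟨Set.range n, ?_, Set.infinite_range_of_injective hn.injective, fun s hs => ?_⟩
  · rintro _ ⟨k, rfl⟩; exact (hXM _).1 (hn_mem k)
  obtain ⟨k, hsk, hNk⟩ : ∃ k, (∀ x ∈ s, x ≤ sInf (X k)) ∧ above (Set.range n) s ⊆ X (k + 1) := by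
    rcases s.eq_empty_or_nonempty with rfl | hne
    · refine ⟨0, by simp, ?_⟩
      rintro _ ⟨⟨j, rfl⟩, -⟩
      exact hX_anti (Nat.le_add_left 1 j) (hn_mem j)
    · obtain ⟨j, hj⟩ := hs (s.max'_mem hne)
      refine ⟨j + 1, fun x hx => (s.le_max' x hx).trans_eq hj.symm, ?_⟩
      rintro _ ⟨⟨i, rfl⟩, hi⟩
      have hji : j < i := hn.lt_iff_lt.1 (hj ▸ hi _ (s.max'_mem hne))
      exact hX_anti (by omega) (hn_mem i)
  exact hP hNk (hP_succ k s hsk)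

end Diagonal

section Acceptance

variable (G : Set (Finset ℕ))

def Accepts (X : Set ℕ) (s : Finset ℕ) : Prop :=
  ∀ Y ⊆ X, Y.Infinite → ∃ t, InitSegOfSet t Y ∧ s ∪ t ∈ G

def Rejects (X : Set ℕ) (s : Finset ℕ) : Prop :=
  ∀ Y ⊆ X, Y.Infinite → ¬ Accepts G Y s

variable {G}

lemma Accepts.mono {X Y : Set ℕ} {s : Finset ℕ} (h : Accepts G X s) (hYX : Y ⊆ X) :
    Accepts G Y s :=
  fun Z hZ => h Z (hZ.trans hYX)

lemma Rejects.mono {X Y : Set ℕ} {s : Finset ℕ} (h : Rejects G X s) (hYX : Y ⊆ X) :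
    Rejects G Y s :=
  fun Z hZ => h Z (hZ.trans hYX)

lemma accepts_of_mem {s : Finset ℕ} (hs : s ∈ G) (X : Set ℕ) : Accepts G X s :=
  fun Y _ _ => ⟨∅, initSegOfSet_empty Y, by simpa using hs⟩

lemma exists_accepts_or_rejects {X : Set ℕ} (hX : X.Infinite) (s : Finset ℕ) :
    ∃ Y ⊆ X, Y.Infinite ∧ (Accepts G Y s ∨ Rejects G Y s) := by
  by_cases h : ∃ Y ⊆ X, Y.Infinite ∧ Accepts G Y s
  · obtain ⟨Y, hYX, hY, hacc⟩ := h
    exact ⟨Y, hYX, hY, Or.inl hacc⟩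
  · push Not at h
    exact ⟨X, subset_rfl, hX, Or.inr h⟩

/-- Otherwise these `n` would form an infinite subset of `N/s` accepting `s`. -/
lemma finite_accepts_insert {N : Set ℕ} {s : Finset ℕ} (h : Rejects G (above N s) s) :
    {n ∈ above N s | Accepts G (above N (insert n s)) (insert n s)}.Finite := by
  by_contra hB
  refine h _ (fun _ hn => hn.1) hB fun Y hYB hY => ?_
  have hmin := hYB (Nat.sInf_mem hY.nonempty)
  obtain ⟨t, ht, hst⟩ := hmin.2 {y ∈ Y | sInf Y < y}
    (fun y hy => mem_above_insert.2 ⟨(hYB hy.1).1, hy.2⟩)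
    ((hY.sdiff (Set.finite_le_nat (sInf Y))).mono fun _ hy => ⟨hy.1, not_le.1 hy.2⟩)
  refine ⟨insert (sInf Y) t, initSegOfSet_insert_sInf hY.nonempty ht, ?_⟩
  rwa [Finset.union_insert, ← Finset.insert_union]

lemma exists_forall_not_mem_of_rejects {N : Set ℕ} (hN : N.Infinite)
    (hdec : ∀ s : Finset ℕ, ↑s ⊆ N → Accepts G (above N s) s ∨ Rejects G (above N s) s)
    (h₀ : Rejects G N ∅) : ∃ Z ⊆ N, Z.Infinite ∧ ∀ s : Finset ℕ, ↑s ⊆ Z → s ∉ G := by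
  obtain ⟨Z, hZN, hZ, hZ_ext⟩ := exists_diagonal
    (P := fun Y s => Rejects G (above N s) s →
      ∀ n ∈ Y, ¬ Accepts G (above N (insert n s)) (insert n s))
    (fun _ _ _ hYX hX hrej n hn => hX hrej n (hYX hn)) hN fun X hXN hX s => by
      by_cases hrej : Rejects G (above N s) s
      · exact ⟨_, Set.sdiff_subset.trans (above_subset X s),
          (infinite_above hX s).sdiff (finite_accepts_insert hrej),
          fun _ n hn hacc => hn.2 ⟨above_mono hXN s hn.1, hacc⟩⟩
      · exact ⟨X, subset_rfl, hX, fun h => (hrej h).elim⟩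
  have hrej (s : Finset ℕ) (hs : ↑s ⊆ Z) : Rejects G (above N s) s := by
    induction s using Finset.induction_on_max with
    | empty => simpa using h₀
    | insert a s has ih =>
      rw [Finset.coe_insert, Set.insert_subset_iff] at hs
      refine (hdec _ ?_).resolve_left (hZ_ext s hs.2 (ih hs.2) a ⟨hs.1, has⟩)
      rw [Finset.coe_insert, Set.insert_subset_iff]
      exact ⟨hZN hs.1, hs.2.trans hZN⟩
  exact ⟨Z, hZN, hZ, fun s hs hsG =>
    hrej s hs _ subset_rfl (infinite_above hN s) (accepts_of_mem hsG _)⟩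

end Acceptance

theorem exists_subset_forall_not_mem_or_forall_initSegOfSet (G : Set (Finset ℕ)) {M : Set ℕ}
    (hM : M.Infinite) :
    ∃ N ⊆ M, N.Infinite ∧ ((∀ s : Finset ℕ, ↑s ⊆ N → s ∉ G) ∨
      ∀ Y ⊆ N, Y.Infinite → ∃ t ∈ G, InitSegOfSet t Y) := by
  obtain ⟨N, hNM, hN, hdec⟩ := exists_diagonal (P := fun X s => Accepts G X s ∨ Rejects G X s)
    (fun _ _ _ hYX h => h.imp (·.mono hYX) (·.mono hYX)) hM
    fun _ _ hX s => exists_accepts_or_rejects hX s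
  rcases (by simpa using hdec ∅ (by simp) : Accepts G N ∅ ∨ Rejects G N ∅) with hacc | hrej
  · refine ⟨N, hNM, hN, Or.inr fun Y hYN hY => ?_⟩
    obtain ⟨t, ht, htG⟩ := hacc Y hYN hY
    exact ⟨t, by simpa using htG, ht⟩
  · obtain ⟨Z, hZN, hZ, hZG⟩ := exists_forall_not_mem_of_rejects hN hdec hrej
    exact ⟨Z, hZN.trans hNM, hZ, Or.inl hZG⟩

lemma exists_subset_initSegOfSet_minimal {F : Set (Finset ℕ)}
    (hNW : ∀ a ∈ F, ∀ b ∈ F, InitSeg a b → a = b) {N : Set ℕ} (hN : N.Infinite)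
    (hF : ∃ a ∈ F, ↑a ⊆ N) :
    ∃ Y ⊆ N, Y.Infinite ∧ ∀ t ∈ F, InitSegOfSet t Y → ∀ b ∈ F, ¬ b ⊂ t := by
  obtain ⟨a, ⟨haF, haN⟩, hmin⟩ :=
    (measure Finset.card).wf.has_min {a : Finset ℕ | a ∈ F ∧ (↑a : Set ℕ) ⊆ N} hF
  refine ⟨↑a ∪ above N a, Set.union_subset haN (above_subset N a),
    (infinite_above hN a).mono Set.subset_union_right, fun t htF htY b hbF hbt => ?_⟩
  obtain rfl : t = a :=
    (initSeg_or_initSeg_of_initSegOfSet htY (initSegOfSet_union_above a N)).elim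
      (hNW t htF a haF) fun h => (hNW a haF t htF h).symm
  exact hmin b ⟨hbF, (Finset.coe_subset.2 hbt.subset).trans haN⟩ (Finset.card_lt_card hbt)

end NashWilliams

theorem stmt_15_general (M : Set ℕ) (hM : M.Infinite) (F : Set (Finset ℕ))
    (hfront : ∀ X : Set ℕ, X ⊆ M → X.Infinite → ∃ a ∈ F, InitSegOfSet a X)
    (hNW : ∀ a ∈ F, ∀ b ∈ F, InitSeg a b → a = b) :
    ∃ N : Set ℕ, N ⊆ M ∧ N.Infinite ∧
      ∀ a ∈ F, ∀ b ∈ F, ↑a ⊆ N → ↑b ⊆ N → ¬ a ⊂ b := by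
  obtain ⟨N, hNM, hN, hG | hG⟩ :=
    NashWilliams.exists_subset_forall_not_mem_or_forall_initSegOfSet {c ∈ F | ∃ b ∈ F, b ⊂ c} hM
  · exact ⟨N, hNM, hN, fun a ha b hb _ hbN hab => hG b hbN ⟨hb, a, ha, hab⟩⟩
  · obtain ⟨a, haF, haN⟩ := hfront N hNM hN
    obtain ⟨Y, hYN, hY, hYmin⟩ :=
      NashWilliams.exists_subset_initSegOfSet_minimal hNW hN
        ⟨a, haF, NashWilliams.subset_of_initSegOfSet haN⟩
    obtain ⟨t, ⟨htF, b, hbF, hbt⟩, htY⟩ := hG Y hYN hY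
    exact (hYmin t htF htY b hbF hbt).elim

/-- Galvin's lemma: every front on an infinite set M restricts to a barrier
on some infinite N ⊆ M. -/
theorem stmt_15 (M : Set ℕ) (hM : M.Infinite) (F : Set (Finset ℕ))
    (hF : ∀ a ∈ F, ↑a ⊆ M)
    (hfront : ∀ X : Set ℕ, X ⊆ M → X.Infinite → ∃ a ∈ F, InitSegOfSet a X)
    (hNW : ∀ a ∈ F, ∀ b ∈ F, InitSeg a b → a = b) :
    ∃ N : Set ℕ, N ⊆ M ∧ N.Infinite ∧
      ∀ a ∈ F, ∀ b ∈ F, ↑a ⊆ N → ↑b ⊆ N → ¬ a ⊂ b :=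
  stmt_15_general M hM F hfront hNW
end

section
/- If U is a Ramsey ultrafilter on ω and F ⊆ [ω]^{<ω} is Nash-Williams, then the family of sets F|X = {a ∈ F : a ⊆ X} for X ∈ U generates an ultrafilter on base set F: for every partition F = F₀ ∪ F₁, there is an X ∈ U and an i ∈ {0,1} with F|X ⊆ F_i, provided F|X is nonempty cofinally. -/
open Filter

namespace InitSeg

theorem iff_subset_forall_lt {s t : Finset ℕ} :
    InitSeg s t ↔ s ⊆ t ∧ ∀ m ∈ s, ∀ n ∈ t \ s, m < n := by
  constructor
  · intro h
    refine ⟨fun n hn => (Finset.mem_filter.1 (h ▸ hn)).1, fun m hm n hn => ?_⟩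
    obtain ⟨hnt, hns⟩ := Finset.mem_sdiff.1 hn
    by_contra! hnm
    exact hns (h ▸ Finset.mem_filter.2 ⟨hnt, m, hm, hnm⟩)
  · rintro ⟨hst, hlt⟩
    ext n
    simp only [Finset.mem_filter]
    refine ⟨fun hn => ⟨hst hn, n, hn, le_rfl⟩, fun ⟨hnt, m, hm, hnm⟩ => ?_⟩
    by_contra hns
    exact (hlt m hm n (Finset.mem_sdiff.2 ⟨hnt, hns⟩)).not_ge hnm

theorem subset {s t : Finset ℕ} (h : InitSeg s t) : s ⊆ t :=
  (iff_subset_forall_lt.1 h).1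

theorem empty (t : Finset ℕ) : InitSeg ∅ t := by
  simp [iff_subset_forall_lt]

theorem trans {s t u : Finset ℕ} (hst : InitSeg s t) (htu : InitSeg t u) : InitSeg s u := by
  rw [iff_subset_forall_lt] at *
  refine ⟨hst.1.trans htu.1, fun m hm n hn => ?_⟩
  obtain ⟨hnu, hns⟩ := Finset.mem_sdiff.1 hn
  by_cases hnt : n ∈ t
  · exact hst.2 m hm n (Finset.mem_sdiff.2 ⟨hnt, hns⟩)
  · exact htu.2 m (hst.1 hm) n (Finset.mem_sdiff.2 ⟨hnu, hnt⟩)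

theorem insert_of_forall_lt {s : Finset ℕ} {a : ℕ} (ha : ∀ x ∈ s, x < a) :
    InitSeg s (insert a s) := by
  refine iff_subset_forall_lt.2 ⟨Finset.subset_insert a s, fun m hm n hn => ?_⟩
  obtain ⟨rfl | hna, hns⟩ := by simpa only [Finset.mem_sdiff, Finset.mem_insert] using hn
  · exact ha m hm
  · exact absurd hna hns

theorem insert_min'_sdiff {s t : Finset ℕ} (h : InitSeg s t) (hne : (t \ s).Nonempty) :
    InitSeg (insert ((t \ s).min' hne) s) t := by
  have hmin := Finset.min'_mem _ hne
  refine iff_subset_forall_lt.2 ⟨Finset.insert_subset (Finset.mem_sdiff.1 hmin).1 h.subset,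
    fun m hm n hn => ?_⟩
  obtain ⟨hnt, hn⟩ := Finset.mem_sdiff.1 hn
  rw [Finset.mem_insert, not_or] at hn
  have hnts : n ∈ t \ s := Finset.mem_sdiff.2 ⟨hnt, hn.2⟩
  rcases Finset.mem_insert.1 hm with rfl | hms
  · exact (Finset.min'_le _ n hnts).lt_of_ne (Ne.symm hn.1)
  · exact (iff_subset_forall_lt.1 h).2 m hms n hnts

end InitSeg

def IsRamseyForPairs (U : Ultrafilter ℕ) : Prop :=
  ∀ R : ℕ → ℕ → Prop, ∃ X ∈ U,
    (∀ m ∈ X, ∀ n ∈ X, m < n → R m n) ∨ ∀ m ∈ X, ∀ n ∈ X, m < n → ¬R m n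

theorem isRamseyForPairs_of_fin_two {U : Ultrafilter ℕ}
    (h : ∀ c : Finset ℕ → Fin 2, ∃ X ∈ U,
      ∀ s t : Finset ℕ, s.card = 2 → ↑s ⊆ X → t.card = 2 → ↑t ⊆ X → c s = c t) :
    IsRamseyForPairs U := by
  classical
  intro R
  let c : Finset ℕ → Fin 2 := fun s => if ∀ m ∈ s, ∀ n ∈ s, m < n → R m n then 0 else 1
  have hc : ∀ m n, m < n → (c {m, n} = 0 ↔ R m n) := by
    intro m n hmn
    simp only [c, Finset.mem_insert, Finset.mem_singleton]
    split_ifs with hR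
    · exact iff_of_true rfl (hR m (Or.inl rfl) n (Or.inr rfl) hmn)
    · refine iff_of_false (by decide) fun hmn' => hR ?_
      rintro a (rfl | rfl) b (rfl | rfl) hab <;> first | exact hmn' | omega
  have hpair : ∀ {X : Set ℕ} {m n}, m ∈ X → n ∈ X → m < n →
      ({m, n} : Finset ℕ).card = 2 ∧ ↑({m, n} : Finset ℕ) ⊆ X := fun hm hn hmn =>
    ⟨Finset.card_pair hmn.ne, by simp [Set.insert_subset_iff, hm, hn]⟩
  obtain ⟨X, hXU, hX⟩ := h c
  refine ⟨X, hXU, or_iff_not_imp_right.2 fun hsome => ?_⟩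
  push Not at hsome
  obtain ⟨m₀, hm₀, n₀, hn₀, hlt₀, hR₀⟩ := hsome
  intro m hm n hn hmn
  have h₀ := hpair hm₀ hn₀ hlt₀
  have h₁ := hpair hm hn hmn
  exact (hc m n hmn).1 ((hX _ _ h₁.1 h₁.2 h₀.1 h₀.2).trans ((hc m₀ n₀ hlt₀).2 hR₀))

namespace IsRamseyForPairs

theorem exists_mem_diagonal {U : Ultrafilter ℕ} (hR : IsRamseyForPairs U)
    (hU : (U : Filter ℕ) ≤ atTop) (B : ℕ → Set ℕ) (hB : ∀ m, B m ∈ U) :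
    ∃ X ∈ U, ∀ m ∈ X, ∀ n ∈ X, m < n → n ∈ B m := by
  obtain ⟨X, hXU, hgood | hbad⟩ := hR fun m n => n ∈ B m
  · exact ⟨X, hXU, hgood⟩
  · obtain ⟨m, hm⟩ := U.nonempty_of_mem hXU
    obtain ⟨n, ⟨hnX, hnB⟩, hmn⟩ :=
      U.nonempty_of_mem (inter_mem (inter_mem hXU (hB m)) (hU (Ioi_mem_atTop m)))
    exact absurd hnB (hbad m hm n hnX hmn)

theorem exists_mem_diagonal_finset {U : Ultrafilter ℕ} (hR : IsRamseyForPairs U)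
    (hU : (U : Filter ℕ) ≤ atTop) (A : Finset ℕ → Set ℕ) (hA : ∀ s, A s ∈ U) :
    ∃ X ∈ U, ∀ s : Finset ℕ, ↑s ⊆ X → ∀ n ∈ X, (∀ m ∈ s, m < n) → n ∈ A s := by
  obtain ⟨X, hXU, hX⟩ := hR.exists_mem_diagonal hU
    (fun m => ⋂ t ∈ (Finset.range (m + 1)).powerset, A t)
    (fun m => (biInter_finset_mem _).2 fun t _ => hA t)
  refine ⟨X ∩ A ∅, inter_mem hXU (hA ∅), fun s hsX n hn hlt => ?_⟩
  rcases s.eq_empty_or_nonempty with rfl | hne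
  · exact hn.2
  · have hmax := s.max'_mem hne
    refine Set.mem_iInter₂.1 (hX _ (hsX hmax).1 n hn.1 (hlt _ hmax)) s ?_
    exact Finset.mem_powerset.2 fun x hx => Finset.mem_range.2 (Nat.lt_succ_of_le (s.le_max' x hx))

end IsRamseyForPairs

def Accepted (U : Ultrafilter ℕ) (G : Set (Finset ℕ)) (s : Finset ℕ) : Prop :=
  ∀ A ∈ U, ∃ b ∈ G, InitSeg s b ∧ ↑(b \ s) ⊆ A

theorem not_accepted_iff {U : Ultrafilter ℕ} {G : Set (Finset ℕ)} {s : Finset ℕ} :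
    ¬Accepted U G s ↔ ∃ A ∈ U, ∀ b ∈ G, InitSeg s b → ¬↑(b \ s) ⊆ A := by
  simp only [Accepted, not_forall, not_exists, not_and, exists_prop]

namespace Accepted

variable {U : Ultrafilter ℕ} {G : Set (Finset ℕ)} {s : Finset ℕ}

theorem mem {F : Set (Finset ℕ)} (hs : Accepted U G s) (hsF : s ∈ F) (hGF : G ⊆ F)
    (hNW : ∀ a ∈ F, ∀ b ∈ F, InitSeg a b → a = b) : s ∈ G := by
  obtain ⟨b, hbG, hsb, -⟩ := hs Set.univ univ_mem
  exact hNW s hsF b (hGF hbG) hsb ▸ hbG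

theorem insert_mem (hR : IsRamseyForPairs U) (hU : (U : Filter ℕ) ≤ atTop)
    (hs : Accepted U G s) (hsG : s ∉ G) : {n | Accepted U G (insert n s)} ∈ U := by
  by_contra hC
  rw [← Ultrafilter.compl_mem_iff_notMem] at hC
  have hwit : ∀ n, ∃ A ∈ U, ¬Accepted U G (insert n s) →
      ∀ b ∈ G, InitSeg (insert n s) b → ¬↑(b \ insert n s) ⊆ A := by
    intro n
    by_cases hn : Accepted U G (insert n s)
    · exact ⟨Set.univ, univ_mem, fun h => absurd hn h⟩
    · obtain ⟨A, hAU, hA⟩ := not_accepted_iff.1 hn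
      exact ⟨A, hAU, fun _ => hA⟩
  choose A hAU hA using hwit
  obtain ⟨X, hXU, hX⟩ := hR.exists_mem_diagonal hU A hAU
  have hgt : {n | ∀ m ∈ s, m < n} ∈ U :=
    hU ((eventually_all_finset s).2 fun m _ => eventually_gt_atTop m)
  obtain ⟨b, hbG, hsb, hbD⟩ := hs _ (inter_mem (inter_mem hXU hC) hgt)
  have hne : (b \ s).Nonempty :=
    Finset.sdiff_nonempty.2 fun h => hsG (Finset.Subset.antisymm h hsb.subset ▸ hbG)
  set n := (b \ s).min' hne
  have hnD := hbD (Finset.mem_coe.2 (Finset.min'_mem _ hne))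
  have hnb : InitSeg (insert n s) b := hsb.insert_min'_sdiff hne
  refine hA n hnD.1.2 b hbG hnb fun k hk => ?_
  have hkb : k ∈ b \ s := Finset.sdiff_subset_sdiff le_rfl (Finset.subset_insert n s) hk
  exact hX n hnD.1.1 k (hbD hkb).1.1
    ((InitSeg.iff_subset_forall_lt.1 hnb).2 n (Finset.mem_insert_self n s) k hk)

theorem of_forall_insert {X : Set ℕ} (h₀ : Accepted U G ∅)
    (hX : ∀ s : Finset ℕ, ↑s ⊆ X → ∀ n ∈ X, (∀ m ∈ s, m < n) →
      Accepted U G s → s ∉ G → Accepted U G (insert n s))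
    (hsX : ↑s ⊆ X) (hs : ∀ t, InitSeg t s → t ≠ s → t ∉ G) : Accepted U G s := by
  induction s using Finset.induction_on_max with
  | empty => exact h₀
  | insert a s ha ih =>
    have has : a ∉ s := fun h => lt_irrefl a (ha a h)
    have hs_ins : InitSeg s (insert a s) := .insert_of_forall_lt ha
    have hs_ne : s ≠ insert a s := fun h => has (h ▸ Finset.mem_insert_self a s)
    have hsX' : ↑s ⊆ X := (Finset.coe_subset.2 (Finset.subset_insert a s)).trans hsX
    refine hX s hsX' a (hsX (by simp)) ha ?_ (hs s hs_ins hs_ne)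
    refine ih hsX' fun t hts _ => hs t (hts.trans hs_ins) fun h => has ?_
    exact hts.subset (h ▸ Finset.mem_insert_self a s)

end Accepted

theorem IsRamseyForPairs.exists_mem_forall_not_subset_or_accepted {U : Ultrafilter ℕ}
    (hR : IsRamseyForPairs U) (hU : (U : Filter ℕ) ≤ atTop) (G : Set (Finset ℕ)) :
    ∃ X ∈ U, (∀ b ∈ G, ¬↑b ⊆ X) ∨
      ∀ s : Finset ℕ, ↑s ⊆ X → (∀ t, InitSeg t s → t ≠ s → t ∉ G) → Accepted U G s := by
  by_cases h₀ : Accepted U G ∅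
  · have hA : ∀ s, {n | Accepted U G s → s ∉ G → Accepted U G (insert n s)} ∈ U := by
      intro s
      by_cases hs : Accepted U G s ∧ s ∉ G
      · exact mem_of_superset (hs.1.insert_mem hR hU hs.2) fun n hn _ _ => hn
      · exact univ_mem' fun n h₁ h₂ => absurd ⟨h₁, h₂⟩ hs
    obtain ⟨X, hXU, hX⟩ := hR.exists_mem_diagonal_finset hU _ hA
    exact ⟨X, hXU, Or.inr fun s => Accepted.of_forall_insert h₀ hX⟩
  · obtain ⟨A, hAU, hA⟩ := not_accepted_iff.1 h₀
    exact ⟨A, hAU, Or.inl fun b hb hbA => hA b hb (.empty b) (by simpa using hbA)⟩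

theorem subsingleton_restrict_singleton {F : Set (Finset ℕ)}
    (hNW : ∀ a ∈ F, ∀ b ∈ F, InitSeg a b → a = b) (a : ℕ) :
    {b ∈ F | ↑b ⊆ ({a} : Set ℕ)}.Subsingleton := by
  have hcases : ∀ b ∈ {b ∈ F | ↑b ⊆ ({a} : Set ℕ)}, b = ∅ ∨ b = {a} := fun b hb =>
    Finset.subset_singleton_iff.1 (by exact_mod_cast hb.2)
  have hboth : ∅ ∈ F → {a} ∈ F → False := fun h₁ h₂ =>
    Finset.singleton_ne_empty a (hNW ∅ h₁ {a} h₂ (.empty _)).symm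
  intro b hb c hc
  rcases hcases b hb with rfl | rfl <;> rcases hcases c hc with rfl | rfl
  exacts [rfl, (hboth hb.1 hc.1).elim, (hboth hc.1 hb.1).elim, rfl]

/-- For a Ramsey ultrafilter U and a Nash-Williams family F, the sets F|X
for X ∈ U generate an ultrafilter on base set F. -/
theorem stmt_17 (U : Ultrafilter ℕ)
    (hRamsey : ∀ k l : ℕ, ∀ c : Finset ℕ → Fin l, ∃ X ∈ U,
      ∀ s t : Finset ℕ, s.card = k → ↑s ⊆ X → t.card = k → ↑t ⊆ X → c s = c t)
    (F : Set (Finset ℕ))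
    (hNW : ∀ a ∈ F, ∀ b ∈ F, InitSeg a b → a = b) :
    ∀ F' ⊆ F, ∃ X : Set ℕ, X ∈ U ∧
      ({a ∈ F | ↑a ⊆ X} ⊆ F' ∨ {a ∈ F | ↑a ⊆ X} ∩ F' = ∅) := by
  intro F' hF'
  rcases U.le_cofinite_or_eq_pure with hU | ⟨a, rfl⟩
  · rw [Nat.cofinite_eq_atTop] at hU
    have hR := isRamseyForPairs_of_fin_two (hRamsey 2 2)
    obtain ⟨X, hXU, hX | hX⟩ := hR.exists_mem_forall_not_subset_or_accepted hU F'
    · exact ⟨X, hXU, Or.inr (Set.eq_empty_of_forall_notMem fun b hb => hX b hb.2 hb.1.2)⟩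
    · refine ⟨X, hXU, Or.inl fun b ⟨hbF, hbX⟩ => ?_⟩
      have hb : Accepted U F' b :=
        hX b hbX fun t htb hne htF' => hne (hNW t (hF' htF') b hbF htb)
      exact hb.mem hbF hF' hNW
  · refine ⟨{a}, Ultrafilter.mem_pure.2 rfl, ?_⟩
    rcases Set.eq_empty_or_nonempty ({b ∈ F | ↑b ⊆ ({a} : Set ℕ)} ∩ F') with h | ⟨b, hb, hbF'⟩
    · exact Or.inr h
    · exact Or.inl fun c hc => subsingleton_restrict_singleton hNW a hc hb ▸ hbF'
end

section
/- Weakly Ramsey ultrafilters from the Ramsey partition relation: if U is an ultrafilter on ω such that for every coloring c : [ω]² → 3 there is X ∈ U with c taking at most 2 values on [X]², then for every l ≥ 2 and every coloring c : [ω]² → l there is X ∈ U with c taking at most 2 values on [X]². -/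
/-!
Given a coloring with finitely many colors, merge one color into another and
find, by induction on the number of colors, a large set on which the merged
coloring takes only two values `v, w`. There the original coloring takes only
the three values `v, w` and the merged-away color, and the three-color
partition relation cuts this down to two.
-/

variable {ι α : Type*} {F : Filter ι}

def PairsMapsTo (c : Finset ι → α) (X : Set ι) (S : Set α) : Prop :=
  ∀ s : Finset ι, s.card = 2 → ↑s ⊆ X → c s ∈ S

theorem PairsMapsTo.mono {c : Finset ι → α} {X X' : Set ι} {S S' : Set α}
    (h : PairsMapsTo c X S) (hX : X' ⊆ X) (hS : S ⊆ S') : PairsMapsTo c X' S' :=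
  fun s hs hsX => hS (h s hs (hsX.trans hX))

theorem exists_pairsMapsTo_pair_of_range_fin_three
    (h3 : ∀ c : Finset ι → Fin 3, ∃ X ∈ F, ∃ v w : Fin 3, PairsMapsTo c X {v, w})
    {c : Finset ι → α} {X : Set ι}
    (hX : X ∈ F) (t : Fin 3 → α) (hc : PairsMapsTo c X (Set.range t)) :
    ∃ X' ∈ F, ∃ v w : α, PairsMapsTo c X' {v, w} := by
  classical
  let d : Finset ι → Fin 3 := fun s => if h : c s ∈ Set.range t then h.choose else 0
  obtain ⟨Y, hY, a, b, hab⟩ := h3 d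
  refine ⟨X ∩ Y, Filter.inter_mem hX hY, t a, t b, fun s hs hsXY => ?_⟩
  have hcs : c s ∈ Set.range t := hc s hs (hsXY.trans Set.inter_subset_left)
  have hd : t (d s) = c s := by simpa only [d, dif_pos hcs] using hcs.choose_spec
  rcases hab s hs (hsXY.trans Set.inter_subset_right) with h | h
  · exact Or.inl (hd ▸ congrArg t h)
  · exact Or.inr (hd ▸ congrArg t h)

theorem exists_pairsMapsTo_pair_of_finset
    (h3 : ∀ c : Finset ι → Fin 3, ∃ X ∈ F, ∃ v w : Fin 3, PairsMapsTo c X {v, w})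
    (S : Finset α) (hS : S.Nonempty) :
    ∀ (c : Finset ι → α) (X : Set ι), X ∈ F → PairsMapsTo c X S →
      ∃ X' ∈ F, ∃ v w : α, PairsMapsTo c X' {v, w} := by
  classical
  induction hS using Finset.Nonempty.cons_induction with
  | singleton a =>
    intro c X hX hc
    exact ⟨X, hX, a, a, hc.mono subset_rfl (by simp)⟩
  | cons a T _ hT ih =>
    intro c X hX hc
    obtain ⟨b, hb⟩ := hT
    let c' : Finset ι → α := fun s => if c s = a then b else c s
    have hc' : PairsMapsTo c' X T := by
      intro s hs hsX
      have := hc s hs hsX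
      by_cases ha : c s = a <;> simp_all [c']
    obtain ⟨X₁, hX₁, v, w, hvw⟩ := ih c' X hX hc'
    refine exists_pairsMapsTo_pair_of_range_fin_three h3 (Filter.inter_mem hX hX₁)
      ![a, v, w] fun s hs hsX => ?_
    by_cases ha : c s = a
    · exact ⟨0, ha.symm⟩
    · have hcs : c' s = c s := if_neg ha
      rcases hcs ▸ hvw s hs (hsX.trans Set.inter_subset_right) with h | h
      · exact ⟨1, h.symm⟩
      · exact ⟨2, h.symm⟩

theorem stmt_19_general (U : Ultrafilter ℕ)
    (h3 : ∀ c : Finset ℕ → Fin 3, ∃ X ∈ U, ∃ v w : Fin 3,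
      ∀ s : Finset ℕ, s.card = 2 → ↑s ⊆ X → c s = v ∨ c s = w) :
    ∀ l : ℕ, 2 ≤ l → ∀ c : Finset ℕ → Fin l, ∃ X ∈ U, ∃ v w : Fin l,
      ∀ s : Finset ℕ, s.card = 2 → ↑s ⊆ X → c s = v ∨ c s = w := by
  intro l hl c
  have hne : (Finset.univ : Finset (Fin l)).Nonempty := ⟨⟨0, by omega⟩, Finset.mem_univ _⟩
  obtain ⟨X, hX, v, w, hvw⟩ :=
    exists_pairsMapsTo_pair_of_finset (F := U) (by simpa [PairsMapsTo] using h3)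
      Finset.univ hne c Set.univ Filter.univ_mem fun s _ _ => Finset.mem_coe.2 (Finset.mem_univ (c s))
  exact ⟨X, hX, v, w, fun s hs hsX => hvw s hs hsX⟩

/-- Weak Ramseyness for 3 colors implies weak Ramseyness for every finite
number of colors. -/
theorem stmt_19 (U : Ultrafilter ℕ) (hU : ∀ a : ℕ, U ≠ pure a)
    (h3 : ∀ c : Finset ℕ → Fin 3, ∃ X ∈ U, ∃ v w : Fin 3,
      ∀ s : Finset ℕ, s.card = 2 → ↑s ⊆ X → c s = v ∨ c s = w) :
    ∀ l : ℕ, 2 ≤ l → ∀ c : Finset ℕ → Fin l, ∃ X ∈ U, ∃ v w : Fin l,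
      ∀ s : Finset ℕ, s.card = 2 → ↑s ⊆ X → c s = v ∨ c s = w :=
  stmt_19_general U h3
end
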